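/- arXiv:2503.18046 — 2 statements merged into one kernel-verified Lean document; each statement's English description precedes it below -/
import Mathlib

section
/- Consider the Markov chain on [0, ∞) with P(0, dy) = β(y)dy and, for x > 0, P(x, dy) = γ(x)δ_0(dy) + (1 − γ(x))δ_{x+1}(dy). If there exists x₁ > 0 such that sup_{x > x₁}(1/γ(x+1) − 1/γ(x)) < 1 and ∫_{x₁}^∞ β(y)/γ(y) dy < ∞, then the chain is ergodic (positive Harris recurrent). -/
open MeasureTheory ENNReal Set

/-- `retProb P A n x`: probability, starting from `x`, that the first return time
`τ_A^+ = inf {k ≥ 1 : X_k ∈ A}` equals `n + 1`. -/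
noncomputable def retProb (P : ℝ → Measure ℝ) (A : Set ℝ) : ℕ → ℝ → ℝ≥0∞
  | 0 => fun x => P x A
  | (n + 1) => fun x => ∫⁻ y in Aᶜ, retProb P A n y ∂(P x)

/-- Ergodicity (positive Harris recurrence) for the chain on `[0,∞)`: the chain returns to the
accessible atom `{0}` almost surely from every state, and it admits an invariant probability
measure. -/
def ErgodicChain (P : ℝ → Measure ℝ) : Prop :=
  (∀ x : ℝ, 0 ≤ x → (∑' n : ℕ, retProb P {0} n x) = 1) ∧
    ∃ μ : Measure ℝ, IsProbabilityMeasure μ ∧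
      ∀ s : Set ℝ, MeasurableSet s → ∫⁻ x, P x s ∂μ = μ s

section auxlemmas
open Filter

noncomputable def pp (γ : ℝ → ℝ) (x : ℝ) (n : ℕ) : ℝ :=
  ∏ k ∈ Finset.range n, (1 - γ (x + k))

section pplemmas

variable {γ : ℝ → ℝ} {x x₁ c : ℝ}

lemma pp_zero : pp γ x 0 = 1 := by simp [pp]

lemma pp_succ (n : ℕ) : pp γ x (n + 1) = pp γ x n * (1 - γ (x + n)) := by
  simp [pp, Finset.prod_range_succ]

lemma pp_add (m n : ℕ) : pp γ x (m + n) = pp γ x m * pp γ (x + m) n := by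
  unfold pp
  rw [Finset.prod_range_add]
  congr 1
  refine Finset.prod_congr rfl fun k _ => ?_
  push_cast
  ring_nf

variable (hγ : ∀ x : ℝ, 0 ≤ x → 0 < γ x ∧ γ x < 1)
include hγ

lemma pp_nonneg (hx : 0 ≤ x) (n : ℕ) : 0 ≤ pp γ x n := by
  refine Finset.prod_nonneg fun k _ => ?_
  have := (hγ (x + k) (by positivity)).2
  linarith

lemma pp_le_one (hx : 0 ≤ x) (n : ℕ) : pp γ x n ≤ 1 := by
  refine Finset.prod_le_one (fun k _ => ?_) (fun k _ => ?_)
  · have := (hγ (x + k) (by positivity)).2; linarith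
  · have := (hγ (x + k) (by positivity)).1; linarith

variable (hx₁ : 0 < x₁) (hc0 : 0 < c) (hc1 : c < 1)
  (hd : ∀ x : ℝ, x₁ < x → 1 / γ (x + 1) - 1 / γ x ≤ c)
include hx₁ hc0 hc1 hd

lemma drift_step {z : ℝ} (hz : x₁ < z) :
    1 + (1 - γ z) * (1 / ((1 - c) * γ (z + 1))) ≤ 1 / ((1 - c) * γ z) := by
  have hz0 : (0:ℝ) ≤ z := le_of_lt (hx₁.trans hz)
  obtain ⟨hg0, hg1⟩ := hγ z hz0
  obtain ⟨hh0, hh1⟩ := hγ (z + 1) (by linarith)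
  have hdz := hd z hz
  have h1c : (0:ℝ) < 1 - c := by linarith
  have key : 1 / γ (z+1) ≤ 1 / γ z + c := by linarith
  have e1 : 1 / ((1-c) * γ (z+1)) = (1 / γ (z+1)) * (1/(1-c)) := by
    rw [one_div, mul_inv]; ring
  have h2 : (1 - γ z) * (1 / ((1 - c) * γ (z + 1)))
      ≤ (1 - γ z) * ((1 / γ z + c) * (1/(1-c))) := by
    rw [e1]
    exact mul_le_mul_of_nonneg_left
      (mul_le_mul_of_nonneg_right key (by positivity)) (by linarith)
  have final : 1 + (1 - γ z) * ((1/γ z + c) * (1/(1-c))) ≤ 1/((1-c)*γ z) := by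
    rw [le_div_iff₀ (by positivity)]
    have expand : (1 + (1 - γ z) * ((1/γ z + c) * (1/(1-c)))) * ((1-c)*γ z)
        = 1 - c * (γ z)^2 := by field_simp; ring
    rw [expand]
    nlinarith [mul_pos hc0 (mul_pos hg0 hg0)]
  linarith


lemma key_bound (hx : x₁ < x) (N : ℕ) :
    ∑ n ∈ Finset.range N, pp γ x n + pp γ x N * (1 / ((1 - c) * γ (x + N)))
      ≤ 1 / ((1 - c) * γ x) := by
  have hx0 : (0:ℝ) ≤ x := le_of_lt (hx₁.trans hx)
  induction N with
  | zero => simp [pp_zero]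
  | succ N ih =>
    refine le_trans ?_ ih
    rw [Finset.sum_range_succ, pp_succ]
    have hcast : x + ((N:ℕ)+1:ℕ) = x + (N:ℝ) + 1 := by push_cast; ring
    rw [hcast]
    have hzx : x₁ < x + N := by
      have : (0:ℝ) ≤ (N:ℝ) := Nat.cast_nonneg N
      linarith
    have hds := drift_step hγ hx₁ hc0 hc1 hd hzx
    have hpn : 0 ≤ pp γ x N := pp_nonneg hγ hx0 N
    have h := mul_le_mul_of_nonneg_left hds hpn
    nlinarith [h]

lemma sum_range_pp_le (hx : x₁ < x) (N : ℕ) :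
    ∑ n ∈ Finset.range N, pp γ x n ≤ 1 / ((1 - c) * γ x) := by
  have h := key_bound hγ hx₁ hc0 hc1 hd hx N
  have hx0 : (0:ℝ) ≤ x := le_of_lt (hx₁.trans hx)
  have hpn : 0 ≤ pp γ x N := pp_nonneg hγ hx0 N
  have hV : 0 ≤ 1 / ((1 - c) * γ (x + N)) := by
    have h1 := (hγ (x + N) (by positivity)).1
    have h1c : (0:ℝ) < 1 - c := by linarith
    positivity
  nlinarith

lemma summable_pp_of_gt (hx : x₁ < x) : Summable (pp γ x) :=
  summable_of_sum_range_le (fun n => pp_nonneg hγ (le_of_lt (hx₁.trans hx)) n)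
    (sum_range_pp_le hγ hx₁ hc0 hc1 hd hx)

lemma tsum_pp_le (hx : x₁ < x) : ∑' n, pp γ x n ≤ 1 / ((1 - c) * γ x) :=
  Summable.tsum_le_of_sum_range_le (summable_pp_of_gt hγ hx₁ hc0 hc1 hd hx)
    (sum_range_pp_le hγ hx₁ hc0 hc1 hd hx)

lemma summable_pp (hx : 0 < x) : Summable (pp γ x) := by
  set m : ℕ := ⌈x₁⌉₊ + 1 with hm
  have hxm : x₁ < x + m := by
    have h1 : x₁ ≤ (⌈x₁⌉₊ : ℝ) := Nat.le_ceil x₁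
    have : ((m:ℕ):ℝ) = (⌈x₁⌉₊ : ℝ) + 1 := by push_cast [hm]; ring
    linarith
  have hbase : Summable (pp γ (x + m)) := summable_pp_of_gt hγ hx₁ hc0 hc1 hd hxm
  have hsh : Summable (fun n => pp γ x (n + m)) := by
    refine Summable.of_nonneg_of_le (fun n => pp_nonneg hγ hx.le _) (fun n => ?_) hbase
    rw [show n + m = m + n from by ring, pp_add]
    have h1 : pp γ x m ≤ 1 := pp_le_one hγ hx.le m
    have h2 : 0 ≤ pp γ (x + m) n := pp_nonneg hγ (by positivity) n
    nlinarith [pp_nonneg hγ hx.le m]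
  exact (summable_nat_add_iff m).mp hsh

lemma tendsto_pp_zero (hx : 0 < x) :
    Filter.Tendsto (pp γ x) Filter.atTop (nhds 0) :=
  (summable_pp hγ hx₁ hc0 hc1 hd hx).tendsto_atTop_zero

lemma hasSum_pp_gamma (hx : 0 < x) :
    HasSum (fun n => pp γ x n * γ (x + n)) 1 := by
  have hterm : ∀ n, pp γ x n * γ (x + n) = pp γ x n - pp γ x (n + 1) := by
    intro n
    rw [pp_succ]; ring
  have hsum : ∀ N, ∑ n ∈ Finset.range N, (pp γ x n * γ (x + n)) = 1 - pp γ x N := by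
    intro N
    simp only [hterm]
    rw [Finset.sum_range_sub' (f := fun n => pp γ x n), pp_zero]
  have hnonneg : ∀ n, 0 ≤ pp γ x n * γ (x + n) := by
    intro n
    exact mul_nonneg (pp_nonneg hγ hx.le n) (hγ (x + n) (by positivity)).1.le
  have hS : Summable (fun n => pp γ x n * γ (x + n)) := by
    refine summable_of_sum_range_le hnonneg (c := 1) (fun N => ?_)
    rw [hsum]
    have := pp_nonneg hγ hx.le N
    linarith
  rw [hS.hasSum_iff_tendsto_nat]
  have := tendsto_pp_zero hγ hx₁ hc0 hc1 hd hx
  have h2 : Filter.Tendsto (fun N => 1 - pp γ x N) Filter.atTop (nhds (1 - 0)) :=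
    Filter.Tendsto.sub tendsto_const_nhds this
  simpa [hsum] using h2

lemma tsum_pp_bound_small (hx₁' : 0 < x₁) {ε : ℝ} (hε : 0 < ε)
    (hεγ : ∀ z : ℝ, z ∈ Icc (0:ℝ) (x₁ + (⌈x₁⌉₊ + 1 : ℕ)) → ε ≤ γ z)
    (hx : 0 < x) (hxle : x ≤ x₁) :
    ∑' n, pp γ x n ≤ (⌈x₁⌉₊ + 1 : ℕ) + 1 / ((1 - c) * ε) := by
  set m : ℕ := ⌈x₁⌉₊ + 1 with hm
  have hxm : x₁ < x + m := by
    have h1 : x₁ ≤ (⌈x₁⌉₊ : ℝ) := Nat.le_ceil x₁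
    have : ((m:ℕ):ℝ) = (⌈x₁⌉₊ : ℝ) + 1 := by push_cast [hm]; ring
    linarith
  have hεm : ε ≤ γ (x + m) := by
    apply hεγ
    constructor
    · positivity
    · have : (x:ℝ) ≤ x₁ := hxle
      simp only [hm]
      push_cast
      linarith
  have hγm := (hγ (x + m) (by positivity)).1
  have hS := summable_pp hγ hx₁ hc0 hc1 hd hx
  rw [← Summable.sum_add_tsum_nat_add m hS]
  have h1 : ∑ n ∈ Finset.range m, pp γ x n ≤ (m : ℝ) := by
    calc ∑ n ∈ Finset.range m, pp γ x n ≤ ∑ n ∈ Finset.range m, (1:ℝ) :=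
      Finset.sum_le_sum (fun n _ => pp_le_one hγ hx.le n)
    _ = m := by simp
  have h2 : ∑' n, pp γ x (n + m) ≤ 1 / ((1 - c) * ε) := by
    have hstep : ∀ n, pp γ x (n + m) ≤ pp γ (x + m) n := by
      intro n
      rw [show n + m = m + n from by ring, pp_add]
      nlinarith [pp_le_one hγ hx.le m, pp_nonneg hγ hx.le m,
        pp_nonneg hγ (show (0:ℝ) ≤ x + m by positivity) n]
    have hSm := summable_pp_of_gt hγ hx₁ hc0 hc1 hd hxm
    calc ∑' n, pp γ x (n + m) ≤ ∑' n, pp γ (x + m) n :=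
      Summable.tsum_le_tsum hstep ((summable_nat_add_iff m).mpr hS) hSm
    _ ≤ 1 / ((1 - c) * γ (x + m)) := tsum_pp_le hγ hx₁ hc0 hc1 hd hxm
    _ ≤ 1 / ((1 - c) * ε) := by
        have h1c : (0:ℝ) < 1 - c := by linarith
        apply one_div_le_one_div_of_le (by positivity)
        have : (0:ℝ) < 1 - c := by linarith
        nlinarith
  linarith

end pplemmas

end auxlemmas

/-- For the chain on `[0,∞)` with `P(0,dy) = β(y)dy` and
`P(x,·) = γ(x) δ₀ + (1−γ(x)) δ_{x+1}` for `x > 0`: if there is `x₁ > 0` with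
`sup_{x > x₁} (1/γ(x+1) − 1/γ(x)) < 1` and `∫_{x₁}^∞ β(y)/γ(y) dy < ∞`, then the chain is
ergodic (positive Harris recurrent). -/
theorem ergodic_criterion
    (γ : ℝ → ℝ) (hγc : Continuous γ) (hγ : ∀ x : ℝ, 0 ≤ x → 0 < γ x ∧ γ x < 1)
    (a : ℝ≥0∞) (ha : 0 < a)
    (β : ℝ → ℝ) (hβ : ∀ x, 0 ≤ β x)
    (hβsupp : ∀ x : ℝ, β x ≠ 0 → 0 < x ∧ ENNReal.ofReal x < a)
    (hβint : ∫ x in Ioi (0 : ℝ), β x = 1)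
    (P : ℝ → Measure ℝ) (hPm : Measurable P)
    (hP0 : P 0 = volume.withDensity fun y => ENNReal.ofReal (β y))
    (hPpos : ∀ x : ℝ, 0 < x →
      P x = ENNReal.ofReal (γ x) • Measure.dirac 0
            + ENNReal.ofReal (1 - γ x) • Measure.dirac (x + 1))
    (hcond : ∃ x₁ : ℝ, 0 < x₁ ∧
      (∃ c : ℝ, c < 1 ∧ ∀ x : ℝ, x₁ < x → 1 / γ (x + 1) - 1 / γ x ≤ c) ∧
      (∫⁻ y in Ioi x₁, ENNReal.ofReal (β y / γ y)) ≠ ⊤) :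
    ErgodicChain P := by
  classical
  obtain ⟨x₁, hx₁, ⟨c₀, hc₀1, hd₀⟩, hint⟩ := hcond
  set c : ℝ := max c₀ (1/2) with hcdef
  have hc0 : (0:ℝ) < c := lt_of_lt_of_le (by norm_num) (le_max_right _ _)
  have hc1 : c < 1 := max_lt hc₀1 (by norm_num)
  have hd : ∀ x : ℝ, x₁ < x → 1 / γ (x + 1) - 1 / γ x ≤ c :=
    fun x hx => (hd₀ x hx).trans (le_max_left _ _)
  -- measurable version of the density
  have hβ0 : ∀ y : ℝ, y ∉ Ioi (0:ℝ) → β y = 0 := by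
    intro y hy
    by_contra h
    exact hy (mem_Ioi.mpr (hβsupp y h).1)
  have hβInt : Integrable β (volume.restrict (Ioi 0)) := by
    by_contra h
    rw [integral_undef h] at hβint
    norm_num at hβint
  have hβae : AEMeasurable β (volume.restrict (Ioi 0)) := hβInt.aemeasurable
  set β₀ : ℝ → ℝ := hβae.mk β with hβ₀def
  have hβ₀m : Measurable β₀ := hβae.measurable_mk
  set g : ℝ → ℝ≥0∞ := fun y => (Ioi (0:ℝ)).indicator (fun t => ENNReal.ofReal (β₀ t)) y
    with hgdef
  have hgm : Measurable g :=
    (measurable_ofReal.comp hβ₀m).indicator measurableSet_Ioi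
  have hg0 : ∀ y, y ∉ Ioi (0:ℝ) → g y = 0 := fun y hy => indicator_of_notMem hy _
  have hglt : ∀ y, g y < ⊤ := by
    intro y
    by_cases hy : y ∈ Ioi (0:ℝ)
    · simp only [hgdef, indicator_of_mem hy]; exact ofReal_lt_top
    · rw [hg0 y hy]; exact zero_lt_top
  have hg : (fun y => ENNReal.ofReal (β y)) =ᵐ[volume] g := by
    have h1 : ∀ᵐ y ∂volume, y ∈ Ioi (0:ℝ) → β y = β₀ y :=
      (ae_restrict_iff' measurableSet_Ioi).mp hβae.ae_eq_mk
    filter_upwards [h1] with y hy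
    by_cases hmem : y ∈ Ioi (0:ℝ)
    · simp only [hgdef, indicator_of_mem hmem, hy hmem]
    · rw [hg0 y hmem, hβ0 y hmem]; simp
  have hgint : ∫⁻ y, g y ∂volume = 1 := by
    have h1 : (fun y => ENNReal.ofReal (β y))
        = (Ioi (0:ℝ)).indicator (fun y => ENNReal.ofReal (β y)) := by
      funext y
      by_cases hy : y ∈ Ioi (0:ℝ)
      · rw [indicator_of_mem hy]
      · rw [indicator_of_notMem hy, hβ0 y hy]; simp
    calc ∫⁻ y, g y ∂volume = ∫⁻ y, ENNReal.ofReal (β y) ∂volume :=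
          lintegral_congr_ae hg.symm
      _ = ∫⁻ y in Ioi 0, ENNReal.ofReal (β y) ∂volume := by
          conv_lhs => rw [h1]
          rw [lintegral_indicator measurableSet_Ioi]
      _ = ENNReal.ofReal (∫ y in Ioi 0, β y) := by
          rw [← ofReal_integral_eq_lintegral_ofReal hβInt
            (Filter.Eventually.of_forall fun y => hβ y)]
      _ = 1 := by rw [hβint]; simp
  have hP0' : P 0 = volume.withDensity g := by
    rw [hP0]; exact withDensity_congr_ae hg
  -- the return-probability formula
  have hppc : ∀ n : ℕ, Continuous fun y : ℝ => pp γ y n := by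
    intro n
    apply continuous_finset_prod
    intro k _
    exact continuous_const.sub (hγc.comp (continuous_id.add continuous_const))
  have hs0 : MeasurableSet ({0} : Set ℝ) := measurableSet_singleton 0
  have hret : ∀ n : ℕ, ∀ x : ℝ, 0 < x →
      retProb P {0} n x = ENNReal.ofReal (pp γ x n * γ (x + n)) := by
    intro n
    induction n with
    | zero =>
      intro x hx
      show P x {0} = _
      rw [hPpos x hx]
      have hne : x + 1 ∉ ({0} : Set ℝ) := by
        simp only [mem_singleton_iff]
        positivity
      simp [Measure.dirac_apply' _ hs0, indicator_of_mem, indicator_of_notMem hne,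
        pp_zero, Pi.single_apply, (show x + 1 ≠ 0 by positivity)]
    | succ n ih =>
      intro x hx
      show ∫⁻ y in ({0}:Set ℝ)ᶜ, retProb P {0} n y ∂(P x) = _
      rw [hPpos x hx]
      have hne : x + 1 ∈ ({0}:Set ℝ)ᶜ := by
        simp only [mem_compl_iff, mem_singleton_iff]
        positivity
      have hr0 : (Measure.dirac (0:ℝ)).restrict ({0}:Set ℝ)ᶜ = 0 := by
        rw [Measure.restrict_eq_zero]
        simp [Measure.dirac_apply' _ hs0.compl]
      have hr1 : (Measure.dirac (x+1)).restrict ({0}:Set ℝ)ᶜ = Measure.dirac (x+1) := by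
        rw [restrict_dirac' hs0.compl]
        simp [hne]
      rw [Measure.restrict_add, Measure.restrict_smul, Measure.restrict_smul, hr0, hr1,
        lintegral_add_measure, lintegral_smul_measure, lintegral_smul_measure,
        lintegral_zero_measure, lintegral_dirac, ih (x+1) (by positivity)]
      have h1 : (0:ℝ) ≤ 1 - γ x := by
        have := (hγ x hx.le).2; linarith
      have h2 : pp γ x (n+1) = (1 - γ x) * pp γ (x+1) n := by
        rw [show n + 1 = 1 + n from by ring, pp_add]
        simp [pp, Finset.prod_range_one]
      have h3 : x + ((n:ℕ)+1:ℕ) = (x+1) + (n:ℝ) := by push_cast; ring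
      rw [smul_zero, zero_add, smul_eq_mul, h3, h2, mul_assoc, ← ENNReal.ofReal_mul h1]
  -- total return probability equals 1 from positive states
  have hsum1 : ∀ x : ℝ, 0 < x →
      ∑' n : ℕ, ENNReal.ofReal (pp γ x n * γ (x + n)) = 1 := by
    intro x hx
    have h := hasSum_pp_gamma hγ hx₁ hc0 hc1 hd hx
    have hnn : ∀ n : ℕ, 0 ≤ pp γ x n * γ (x + n) := fun n =>
      mul_nonneg (pp_nonneg hγ hx.le n) (hγ (x + n) (by positivity)).1.le
    rw [← ENNReal.ofReal_tsum_of_nonneg hnn h.summable, h.tsum_eq]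
    simp
  constructor
  · -- part 1 : return to the atom with probability one
    intro x hx
    rcases hx.lt_or_eq with hx | hx
    · calc ∑' n : ℕ, retProb P {0} n x
          = ∑' n : ℕ, ENNReal.ofReal (pp γ x n * γ (x + n)) :=
            tsum_congr fun n => hret n x hx
        _ = 1 := hsum1 x hx
    · subst hx
      have hvol0 : (volume : Measure ℝ).restrict (({0}:Set ℝ)ᶜ) = volume := by
        apply Measure.restrict_eq_self_of_ae_mem
        refine (ae_iff (p := fun x : ℝ => x ∈ (({0}:Set ℝ)ᶜ))).mpr ?_
        simp
      have hFm : ∀ n : ℕ, Measurable fun y : ℝ => ENNReal.ofReal (pp γ y n * γ (y + n)) := by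
        intro n
        exact measurable_ofReal.comp
          ((hppc n).mul (hγc.comp (continuous_id.add continuous_const))).measurable
      have hF : ∀ n : ℕ, retProb P {0} (n+1) 0
          = ∫⁻ y, g y * ENNReal.ofReal (pp γ y n * γ (y + n)) ∂volume := by
        intro n
        show ∫⁻ y in ({0}:Set ℝ)ᶜ, retProb P {0} n y ∂(P 0) = _
        rw [hP0', restrict_withDensity hs0.compl,
          lintegral_withDensity_eq_lintegral_mul_non_measurable _ hgm
            (Filter.Eventually.of_forall hglt), hvol0]
        apply lintegral_congr
        intro y
        simp only [Pi.mul_apply]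
        by_cases hy : y ∈ Ioi (0:ℝ)
        · rw [hret n y hy]
        · rw [hg0 y hy, zero_mul, zero_mul]
      have h0 : retProb P {0} 0 0 = 0 := by
        show P 0 {0} = 0
        rw [hP0', withDensity_apply _ hs0]
        have hz : (volume : Measure ℝ).restrict ({0}:Set ℝ) = 0 := by
          rw [Measure.restrict_eq_zero]; simp
        rw [hz, lintegral_zero_measure]
      rw [tsum_eq_zero_add' ENNReal.summable, h0, zero_add]
      calc ∑' n : ℕ, retProb P {0} (n+1) 0
          = ∑' n : ℕ, ∫⁻ y, g y * ENNReal.ofReal (pp γ y n * γ (y + n)) ∂volume :=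
            tsum_congr hF
        _ = ∫⁻ y, ∑' n : ℕ, g y * ENNReal.ofReal (pp γ y n * γ (y + n)) ∂volume :=
            (lintegral_tsum fun n => (hgm.mul (hFm n)).aemeasurable).symm
        _ = ∫⁻ y, g y * ∑' n : ℕ, ENNReal.ofReal (pp γ y n * γ (y + n)) ∂volume :=
            lintegral_congr fun y => ENNReal.tsum_mul_left
        _ = ∫⁻ y, g y ∂volume := by
            apply lintegral_congr
            intro y
            by_cases hy : y ∈ Ioi (0:ℝ)
            · rw [hsum1 y hy, mul_one]
            · rw [hg0 y hy, zero_mul]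
        _ = 1 := hgint
  · -- part 2 : invariant probability measure
    set q : ℕ → ℝ → ℝ≥0∞ := fun n y => ENNReal.ofReal (pp γ y n) with hqdef
    have hqm : ∀ n, Measurable (q n) := fun n => measurable_ofReal.comp (hppc n).measurable
    have hγnm : ∀ n : ℕ, Measurable fun y : ℝ => ENNReal.ofReal (γ (y + (n:ℝ))) := fun n =>
      measurable_ofReal.comp (hγc.comp (continuous_id.add continuous_const)).measurable
    set ν : ℕ → Measure ℝ := fun n =>
      Measure.map (fun y => y + (n:ℝ)) (volume.withDensity (fun y => g y * q n y)) with hνdef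
    have hν_apply : ∀ (n : ℕ) {s : Set ℝ}, MeasurableSet s →
        ν n s = ∫⁻ y, g y * q n y * s.indicator 1 (y + (n:ℝ)) ∂volume := by
      intro n s hs
      simp only [hνdef]
      rw [Measure.map_apply (measurable_add_const _) hs,
        withDensity_apply _ ((measurable_add_const (n:ℝ)) hs),
        ← lintegral_indicator ((measurable_add_const (n:ℝ)) hs)]
      apply lintegral_congr
      intro y
      by_cases hy : y + (n:ℝ) ∈ s
      · have hy' : y ∈ (fun y => y + (n:ℝ)) ⁻¹' s := hy
        simp [indicator_of_mem hy', indicator_of_mem hy]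
      · have hy' : y ∉ (fun y => y + (n:ℝ)) ⁻¹' s := hy
        simp [indicator_of_notMem hy', indicator_of_notMem hy]
    have hν_univ : ∀ n, ν n univ = ∫⁻ y, g y * q n y ∂volume := by
      intro n
      rw [hν_apply n MeasurableSet.univ]
      simp
    set μtot : Measure ℝ := Measure.dirac 0 + Measure.sum ν with hμtotdef
    -- finiteness of the total mass
    obtain ⟨ε, hε0, hεγ⟩ : ∃ ε > 0, ∀ z ∈ Icc (0:ℝ) (x₁ + ((⌈x₁⌉₊+1:ℕ):ℝ)), ε ≤ γ z := by
      obtain ⟨z₀, hz₀, hmin⟩ := (isCompact_Icc (a := (0:ℝ))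
          (b := x₁ + ((⌈x₁⌉₊+1:ℕ):ℝ))).exists_isMinOn
        ⟨0, left_mem_Icc.mpr (add_nonneg hx₁.le (Nat.cast_nonneg _))⟩ hγc.continuousOn
      exact ⟨γ z₀, (hγ z₀ hz₀.1).1, fun z hz => isMinOn_iff.mp hmin z hz⟩
    set B1 : ℝ := ((⌈x₁⌉₊+1:ℕ):ℝ) + 1/((1-c)*ε) with hB1def
    have hSle : ∀ y : ℝ, 0 < y → y ≤ x₁ → (∑' n, q n y) ≤ ENNReal.ofReal B1 := by
      intro y hy hyle
      simp only [hqdef]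
      rw [← ENNReal.ofReal_tsum_of_nonneg (fun n => pp_nonneg hγ hy.le n)
        (summable_pp hγ hx₁ hc0 hc1 hd hy)]
      exact ENNReal.ofReal_le_ofReal
        (tsum_pp_bound_small hγ hx₁ hc0 hc1 hd hx₁ hε0 hεγ hy hyle)
    have hfin : ∫⁻ y, g y * ∑' n, q n y ∂volume ≠ ⊤ := by
      rw [← lintegral_add_compl (fun y => g y * ∑' n, q n y) (measurableSet_Iic (a := x₁))]
      have h1 : ∫⁻ y in Iic x₁, g y * ∑' n, q n y ∂volume ≤ ENNReal.ofReal B1 := by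
        calc ∫⁻ y in Iic x₁, g y * ∑' n, q n y ∂volume
            ≤ ∫⁻ y in Iic x₁, ENNReal.ofReal B1 * g y ∂volume := by
              apply lintegral_mono_ae
              refine (ae_restrict_iff' measurableSet_Iic).mpr (Filter.Eventually.of_forall ?_)
              intro y hyle
              by_cases hy0 : y ∈ Ioi (0:ℝ)
              · calc g y * ∑' n, q n y ≤ g y * ENNReal.ofReal B1 :=
                    mul_le_mul_right (hSle y hy0 hyle) _
                  _ = ENNReal.ofReal B1 * g y := mul_comm _ _
              · rw [hg0 y hy0, zero_mul]; exact zero_le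
          _ ≤ ENNReal.ofReal B1 * ∫⁻ y, g y ∂volume := by
              rw [lintegral_const_mul' _ _ ofReal_ne_top]
              exact mul_le_mul_right (setLIntegral_le_lintegral _ _) _
          _ = ENNReal.ofReal B1 := by rw [hgint, mul_one]
      have h2 : ∫⁻ y in (Iic x₁)ᶜ, g y * ∑' n, q n y ∂volume
          ≤ ENNReal.ofReal (1/(1-c)) * ∫⁻ y in Ioi x₁, ENNReal.ofReal (β y / γ y) ∂volume := by
        rw [compl_Iic]
        have hgr : (fun y => ENNReal.ofReal (β y)) =ᵐ[volume.restrict (Ioi x₁)] g :=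
          ae_restrict_of_ae hg
        calc ∫⁻ y in Ioi x₁, g y * ∑' n, q n y ∂volume
            = ∫⁻ y in Ioi x₁, ENNReal.ofReal (β y) * ∑' n, q n y ∂volume :=
              lintegral_congr_ae ((hgr.symm).mul (Filter.EventuallyEq.refl _ _))
          _ ≤ ∫⁻ y in Ioi x₁, ENNReal.ofReal (1/(1-c)) * ENNReal.ofReal (β y / γ y) ∂volume := by
              apply lintegral_mono_ae
              refine (ae_restrict_iff' measurableSet_Ioi).mpr (Filter.Eventually.of_forall ?_)
              intro y hy
              by_cases hβy : β y = 0
              · simp [hβy]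
              · have hy0 : 0 < y := (hβsupp y hβy).1
                have hγy := (hγ y hy0.le).1
                have h1c : (0:ℝ) < 1 - c := by linarith
                have hS : (∑' n, q n y) ≤ ENNReal.ofReal (1/((1-c) * γ y)) := by
                  simp only [hqdef]
                  rw [← ENNReal.ofReal_tsum_of_nonneg (fun n => pp_nonneg hγ hy0.le n)
                    (summable_pp hγ hx₁ hc0 hc1 hd hy0)]
                  exact ENNReal.ofReal_le_ofReal (tsum_pp_le hγ hx₁ hc0 hc1 hd hy)
                calc ENNReal.ofReal (β y) * ∑' n, q n y
                    ≤ ENNReal.ofReal (β y) * ENNReal.ofReal (1/((1-c) * γ y)) :=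
                      mul_le_mul_right hS _
                  _ = ENNReal.ofReal (β y * (1/((1-c) * γ y))) :=
                      (ENNReal.ofReal_mul (hβ y)).symm
                  _ = ENNReal.ofReal ((1/(1-c)) * (β y / γ y)) := by
                      congr 1
                      field_simp
                  _ = ENNReal.ofReal (1/(1-c)) * ENNReal.ofReal (β y / γ y) :=
                      ENNReal.ofReal_mul (by positivity)
          _ = ENNReal.ofReal (1/(1-c)) * ∫⁻ y in Ioi x₁, ENNReal.ofReal (β y / γ y) ∂volume :=
              lintegral_const_mul' _ _ ofReal_ne_top
      exact ne_top_of_le_ne_top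
        (ENNReal.add_ne_top.mpr ⟨ofReal_ne_top, ENNReal.mul_ne_top ofReal_ne_top hint⟩)
        (add_le_add h1 h2)
    have hsum_univ : Measure.sum ν univ = ∫⁻ y, g y * ∑' n, q n y ∂volume := by
      rw [Measure.sum_apply _ MeasurableSet.univ]
      calc ∑' n, ν n univ = ∑' n, ∫⁻ y, g y * q n y ∂volume := tsum_congr hν_univ
        _ = ∫⁻ y, ∑' n, g y * q n y ∂volume :=
            (lintegral_tsum fun n => (hgm.mul (hqm n)).aemeasurable).symm
        _ = _ := lintegral_congr fun y => ENNReal.tsum_mul_left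
    have hμtot_univ : μtot univ = 1 + ∫⁻ y, g y * ∑' n, q n y ∂volume := by
      rw [hμtotdef, Measure.add_apply, hsum_univ]
      congr 1
      simp
    have hμtot_ne : μtot univ ≠ ⊤ := by
      rw [hμtot_univ]
      exact ENNReal.add_ne_top.mpr ⟨one_ne_top, hfin⟩
    have hμtot_pos : μtot univ ≠ 0 := by
      rw [hμtot_univ]
      intro h
      rw [add_eq_zero] at h
      exact one_ne_zero h.1
    -- invariance of μtot
    have hinv : ∀ s : Set ℝ, MeasurableSet s → ∫⁻ x, P x s ∂μtot = μtot s := by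
      intro s hs
      have hPs : Measurable fun x => P x s := (Measure.measurable_coe hs).comp hPm
      have hind_ne : s.indicator (1 : ℝ → ℝ≥0∞) 0 ≠ ⊤ := by
        by_cases h0 : (0:ℝ) ∈ s <;> simp [h0]
      have hstep : ∀ n : ℕ, ∫⁻ x, P x s ∂(ν n)
          = (∫⁻ y, g y * (q n y * ENNReal.ofReal (γ (y + (n:ℝ)))) ∂volume) * s.indicator 1 0
            + ν (n+1) s := by
        intro n
        simp only [hνdef]
        have hPsn : Measurable fun y : ℝ => P (y + (n:ℝ)) s :=
          hPs.comp (measurable_add_const _)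
        rw [lintegral_map hPs (measurable_add_const _),
          lintegral_withDensity_eq_lintegral_mul _ (f := fun y => g y * q n y) (hgm.mul (hqm n)) hPsn]
        have hpt : ∀ y : ℝ, ((fun y => g y * q n y) * fun y => P (y + (n:ℝ)) s) y
            = g y * (q n y * ENNReal.ofReal (γ (y + (n:ℝ)))) * s.indicator 1 0
              + g y * q (n+1) y * s.indicator 1 (y + ((n+1:ℕ):ℝ)) := by
          intro y
          simp only [Pi.mul_apply]
          by_cases hy : y ∈ Ioi (0:ℝ)
          · have hy0 : (0:ℝ) < y := hy
            have hyn : (0:ℝ) < y + (n:ℝ) := by positivity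
            rw [hPpos _ hyn, Measure.add_apply, Measure.smul_apply, Measure.smul_apply,
              Measure.dirac_apply' _ hs, Measure.dirac_apply' _ hs]
            have hq : q (n+1) y = q n y * ENNReal.ofReal (1 - γ (y + (n:ℝ))) := by
              simp only [hqdef]
              rw [pp_succ, ENNReal.ofReal_mul (pp_nonneg hγ hy0.le n)]
            have hcast : y + ((n+1:ℕ):ℝ) = y + (n:ℝ) + 1 := by push_cast; ring
            rw [hq, hcast, smul_eq_mul, smul_eq_mul]
            ring
          · rw [hg0 y hy]
            simp
        rw [lintegral_congr hpt,
          lintegral_add_left (f := fun y => g y * (q n y * ENNReal.ofReal (γ (y + (n:ℝ)))) * s.indicator 1 0) (((hgm.mul ((hqm n).mul (hγnm n))).mul_const _)),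
          lintegral_mul_const' _ _ hind_ne, ← hν_apply (n+1) hs]
      have hAsum : ∑' n : ℕ, ∫⁻ y, g y * (q n y * ENNReal.ofReal (γ (y + (n:ℝ)))) ∂volume
          = 1 := by
        rw [← lintegral_tsum (f := fun n y => g y * (q n y * ENNReal.ofReal (γ (y + (n:ℝ))))) (fun n => (hgm.mul ((hqm n).mul (hγnm n))).aemeasurable)]
        calc ∫⁻ y, ∑' n, g y * (q n y * ENNReal.ofReal (γ (y + (n:ℝ)))) ∂volume
            = ∫⁻ y, g y * ∑' n, q n y * ENNReal.ofReal (γ (y + (n:ℝ))) ∂volume :=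
              lintegral_congr fun y => ENNReal.tsum_mul_left
          _ = ∫⁻ y, g y ∂volume := by
              apply lintegral_congr
              intro y
              by_cases hy : y ∈ Ioi (0:ℝ)
              · have h1 : ∑' n : ℕ, q n y * ENNReal.ofReal (γ (y + (n:ℝ))) = 1 := by
                  rw [← hsum1 y hy]
                  apply tsum_congr
                  intro n
                  simp only [hqdef]
                  exact (ENNReal.ofReal_mul (pp_nonneg hγ (le_of_lt hy) n)).symm
                rw [h1, mul_one]
              · rw [hg0 y hy, zero_mul]
          _ = 1 := hgint
      have hν0 : ν 0 = volume.withDensity g := by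
        simp only [hνdef]
        have h1 : (fun y : ℝ => g y * q 0 y) = g := by
          funext y
          simp [hqdef, pp_zero]
        have h2 : (fun y : ℝ => y + ((0:ℕ):ℝ)) = id := by funext y; simp
        rw [h1, h2, Measure.map_id]
      calc ∫⁻ x, P x s ∂μtot
          = P 0 s + ∑' n, ∫⁻ x, P x s ∂(ν n) := by
            rw [hμtotdef, lintegral_add_measure, lintegral_sum_measure, lintegral_dirac]
        _ = P 0 s + ((∑' n, ∫⁻ y, g y * (q n y * ENNReal.ofReal (γ (y + (n:ℝ)))) ∂volume)
              * s.indicator 1 0 + ∑' n, ν (n+1) s) := by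
            rw [tsum_congr hstep, ENNReal.tsum_add, ENNReal.tsum_mul_right]
        _ = P 0 s + (s.indicator 1 0 + ∑' n, ν (n+1) s) := by
            rw [hAsum, one_mul]
        _ = μtot s := by
            have hμs : μtot s = s.indicator 1 0 + (ν 0 s + ∑' n, ν (n+1) s) := by
              rw [hμtotdef, Measure.add_apply, Measure.sum_apply _ hs,
                tsum_eq_zero_add' ENNReal.summable, Measure.dirac_apply' _ hs]
            rw [hμs, hν0, ← hP0']
            ring
    refine ⟨(μtot univ)⁻¹ • μtot, ⟨?_⟩, ?_⟩
    · show ((μtot univ)⁻¹ • μtot) univ = 1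
      rw [Measure.smul_apply, smul_eq_mul]
      exact ENNReal.inv_mul_cancel hμtot_pos hμtot_ne
    · intro s hs
      rw [lintegral_smul_measure, hinv s hs, Measure.smul_apply, smul_eq_mul]
end

section
/- Consider the Markov chain on [0, ∞) with P(0, dy) = β(y)dy and, for x > 0, P(x, dy) = γ(x)δ_0(dy) + (1 − γ(x))δ_{x+1}(dy). If liminf_{x→∞} γ(x) > 0, then the chain is strongly (uniformly) ergodic. -/
open MeasureTheory ENNReal Set

/-- Strong (uniform) ergodicity for the chain on `[0,∞)`, via its characterization on the
petite set `{0}` (an accessible atom): the chain returns to `{0}` almost surely from every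
state, and `sup_{x ≥ 0} E_x[τ_{0}^+] < ∞`. -/
def StronglyErgodicChain (P : ℝ → Measure ℝ) : Prop :=
  (∀ x : ℝ, 0 ≤ x → (∑' n : ℕ, retProb P {0} n x) = 1) ∧
    ∃ b : ℝ≥0∞, b ≠ ⊤ ∧ ∀ x : ℝ, 0 ≤ x →
      (∑' n : ℕ, ((n : ℝ≥0∞) + 1) * retProb P {0} n x) ≤ b

lemma retProb_measurable (P : ℝ → Measure ℝ) (hPm : Measurable P) (n : ℕ) :
    Measurable (retProb P {0} n) := by
  induction n with
  | zero => exact (Measure.measurable_coe (measurableSet_singleton 0)).comp hPm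
  | succ n ih =>
    have h : retProb P {0} (n + 1)
        = fun x => ∫⁻ y, (({0} : Set ℝ)ᶜ).indicator (retProb P {0} n) y ∂(P x) := by
      funext x
      rw [lintegral_indicator (measurableSet_singleton 0).compl]
      rfl
    rw [h]
    exact (Measure.measurable_lintegral
      (ih.indicator (measurableSet_singleton 0).compl)).comp hPm

/-- Partial sums of first-return probabilities: telescoping identity. -/
lemma retProb_sum_formula (p : ℕ → ℝ) (N : ℕ) :
    ∑ n ∈ Finset.range N, (∏ k ∈ Finset.range n, (1 - p k)) * p n
      = 1 - ∏ n ∈ Finset.range N, (1 - p n) := by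
  induction N with
  | zero => simp
  | succ N ih => rw [Finset.sum_range_succ, Finset.prod_range_succ, ih]; ring

/-- For the chain on `[0,∞)` with `P(0,dy) = β(y)dy` and
`P(x,·) = γ(x) δ₀ + (1−γ(x)) δ_{x+1}` for `x > 0`: if `liminf_{x→∞} γ(x) > 0`, then the
chain is strongly (uniformly) ergodic. -/
theorem strongly_ergodic_criterion
    (γ : ℝ → ℝ) (hγc : Continuous γ) (hγ : ∀ x : ℝ, 0 ≤ x → 0 < γ x ∧ γ x < 1)
    (a : ℝ≥0∞) (ha : 0 < a)
    (β : ℝ → ℝ) (hβ : ∀ x, 0 ≤ β x)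
    (hβsupp : ∀ x : ℝ, β x ≠ 0 → 0 < x ∧ ENNReal.ofReal x < a)
    (hβint : ∫ x in Ioi (0 : ℝ), β x = 1)
    (P : ℝ → Measure ℝ) (hPm : Measurable P)
    (hP0 : P 0 = volume.withDensity fun y => ENNReal.ofReal (β y))
    (hPpos : ∀ x : ℝ, 0 < x →
      P x = ENNReal.ofReal (γ x) • Measure.dirac 0
            + ENNReal.ofReal (1 - γ x) • Measure.dirac (x + 1))
    (hliminf : ∃ c : ℝ, 0 < c ∧ ∃ M : ℝ, ∀ x : ℝ, M ≤ x → c ≤ γ x) :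
    StronglyErgodicChain P := by
  classical
  obtain ⟨c, hc, M, hM⟩ := hliminf
  -- a uniform lower bound c₀ for γ on [0,∞)
  obtain ⟨y₀, hy₀mem, hy₀min⟩ := (isCompact_Icc (a := (0:ℝ)) (b := max M 0)).exists_isMinOn
    (nonempty_Icc.2 (le_max_right M 0)) hγc.continuousOn
  set c₀ : ℝ := min c (γ y₀) with hc₀def
  have hy₀pos : 0 < γ y₀ := (hγ y₀ hy₀mem.1).1
  have hc₀pos : 0 < c₀ := lt_min hc hy₀pos
  have hc₀lt1 : c₀ < 1 := lt_of_le_of_lt (min_le_right _ _) (hγ y₀ hy₀mem.1).2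
  have hbound : ∀ y : ℝ, 0 ≤ y → c₀ ≤ γ y := by
    intro y hy
    rcases le_total y (max M 0) with h | h
    · exact le_trans (min_le_right _ _) (hy₀min ⟨hy, h⟩)
    · exact le_trans (min_le_left _ _) (hM y (le_trans (le_max_left M 0) h))
  set q : ℝ := 1 - c₀ with hqdef
  have hq0 : 0 ≤ q := by linarith
  have hq1 : q < 1 := by linarith
  -- explicit formula for retProb at x > 0
  have hform : ∀ n : ℕ, ∀ x : ℝ, 0 < x →
      retProb P {0} n x
        = ENNReal.ofReal ((∏ k ∈ Finset.range n, (1 - γ (x + k))) * γ (x + n)) := by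
    intro n
    induction n with
    | zero =>
      intro x hx
      show P x {0} = _
      rw [hPpos x hx]
      have hx1 : (x + 1 : ℝ) ∉ ({0} : Set ℝ) := by
        simp only [mem_singleton_iff]; positivity
      simp [Measure.dirac_apply' _ (measurableSet_singleton 0), indicator_of_mem,
        indicator_of_notMem hx1, Pi.single_apply, show x + 1 ≠ 0 from hx1]
    | succ n ih =>
      intro x hx
      have hx1 : (0:ℝ) < x + 1 := by positivity
      show (∫⁻ y in ({0} : Set ℝ)ᶜ, retProb P {0} n y ∂(P x)) = _
      rw [hPpos x hx]
      rw [Measure.restrict_add, Measure.restrict_smul, Measure.restrict_smul,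
        lintegral_add_measure, lintegral_smul_measure, lintegral_smul_measure,
        setLIntegral_dirac, setLIntegral_dirac]
      have h0 : (0:ℝ) ∉ ({0} : Set ℝ)ᶜ := by simp
      have h1 : (x + 1 : ℝ) ∈ ({0} : Set ℝ)ᶜ := by
        simp only [mem_compl_iff, mem_singleton_iff]; positivity
      rw [if_neg h0, if_pos h1, smul_zero, zero_add, smul_eq_mul, ih (x + 1) hx1]
      have hnn : 0 ≤ (∏ k ∈ Finset.range n, (1 - γ (x + 1 + k))) * γ (x + 1 + n) := by
        apply mul_nonneg
        · exact Finset.prod_nonneg fun k _ => by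
            have : (0:ℝ) ≤ x + 1 + k := by positivity
            linarith [(hγ _ this).2]
        · have : (0:ℝ) ≤ x + 1 + n := by positivity
          exact (hγ _ this).1.le
      rw [← ENNReal.ofReal_mul (by linarith [(hγ x hx.le).2])]
      congr 1
      rw [Finset.prod_range_succ']
      have he : ∀ k : ℕ, x + ((k : ℕ) + 1 : ℕ) = x + 1 + k := by
        intro k; push_cast; ring
      have he2 : x + ((n : ℕ) + 1 : ℕ) = x + 1 + n := by push_cast; ring
      simp only [he, he2, Nat.cast_zero, add_zero]
      ring
  -- bound on the product
  have hfact : ∀ x : ℝ, 0 ≤ x → ∀ k : ℕ, 0 ≤ 1 - γ (x + k) ∧ 1 - γ (x + k) ≤ q := by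
    intro x hx k
    have hxk : (0:ℝ) ≤ x + k := by positivity
    exact ⟨by linarith [(hγ _ hxk).2], by linarith [hbound _ hxk]⟩
  have hprod : ∀ x : ℝ, 0 ≤ x → ∀ n : ℕ,
      ∏ k ∈ Finset.range n, (1 - γ (x + k)) ≤ q ^ n := by
    intro x hx n
    calc ∏ k ∈ Finset.range n, (1 - γ (x + k))
        ≤ ∏ _k ∈ Finset.range n, q :=
          Finset.prod_le_prod (fun k _ => (hfact x hx k).1) (fun k _ => (hfact x hx k).2)
      _ = q ^ n := by rw [Finset.prod_const, Finset.card_range]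
  have hprodnn : ∀ x : ℝ, 0 ≤ x → ∀ n : ℕ,
      0 ≤ ∏ k ∈ Finset.range n, (1 - γ (x + k)) :=
    fun x hx n => Finset.prod_nonneg fun k _ => (hfact x hx k).1
  -- the total return probability from x > 0 equals 1
  have hsum1 : ∀ x : ℝ, 0 < x → (∑' n : ℕ, retProb P {0} n x) = 1 := by
    intro x hx
    have h1 := ENNReal.tendsto_nat_tsum (fun n => retProb P {0} n x)
    have h2 : Filter.Tendsto (fun N => ∑ n ∈ Finset.range N, retProb P {0} n x)
        Filter.atTop (nhds 1) := by
      have heq : ∀ N, ∑ n ∈ Finset.range N, retProb P {0} n x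
          = ENNReal.ofReal (1 - ∏ n ∈ Finset.range N, (1 - γ (x + n))) := by
        intro N
        rw [← retProb_sum_formula (fun n => γ (x + n)) N,
          ENNReal.ofReal_sum_of_nonneg
            (fun n _ => mul_nonneg (hprodnn x hx.le n) (hγ _ (by positivity)).1.le)]
        exact Finset.sum_congr rfl fun n _ => hform n x hx
      simp only [heq]
      have hto : Filter.Tendsto (fun N : ℕ => 1 - ∏ n ∈ Finset.range N, (1 - γ (x + n)))
          Filter.atTop (nhds 1) := by
        have hp0 : Filter.Tendsto (fun N : ℕ => ∏ n ∈ Finset.range N, (1 - γ (x + n)))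
            Filter.atTop (nhds 0) := by
          apply squeeze_zero (fun N => hprodnn x hx.le N) (fun N => hprod x hx.le N)
          exact tendsto_pow_atTop_nhds_zero_of_lt_one hq0 hq1
        have := hp0.const_sub 1
        simpa using this
      have := (ENNReal.continuous_ofReal.tendsto 1).comp hto
      simpa [Function.comp_def] using this
    exact tendsto_nhds_unique h1 h2
  -- P 0 facts
  have hP00 : P 0 {0} = 0 := by
    rw [hP0, withDensity_apply _ (measurableSet_singleton 0),
      Measure.restrict_eq_zero.mpr Real.volume_singleton, lintegral_zero_measure]
  have hβzero : ∀ y : ℝ, y ≤ 0 → β y = 0 := by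
    intro y hy
    by_contra h
    exact absurd (hβsupp y h).1 (not_lt.2 hy)
  have hβInt : IntegrableOn β (Ioi (0:ℝ)) := by
    by_contra h
    rw [integral_undef h] at hβint
    norm_num at hβint
  have hP0univ : P 0 univ = 1 := by
    rw [hP0]
    rw [withDensity_apply _ MeasurableSet.univ, Measure.restrict_univ]
    rw [← lintegral_add_compl (fun y => ENNReal.ofReal (β y)) measurableSet_Ioi (μ := volume)]
    have h2 : ∫⁻ y in (Ioi (0:ℝ))ᶜ, ENNReal.ofReal (β y) = 0 := by
      rw [setLIntegral_congr_fun measurableSet_Ioi.compl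
        (fun y hy => ?_), lintegral_zero]
      simp only [mem_compl_iff, mem_Ioi, not_lt] at hy
      simp [hβzero y hy]
    have h1 : ∫⁻ y in Ioi (0:ℝ), ENNReal.ofReal (β y) = 1 := by
      rw [← ofReal_integral_eq_lintegral_ofReal hβInt
        (Filter.Eventually.of_forall fun y => hβ y), hβint, ENNReal.ofReal_one]
    rw [h1, h2, add_zero]
  have hae : ∀ᵐ y ∂(P 0), 0 < y := by
    rw [hP0, ae_iff]
    have hset : {y : ℝ | ¬ 0 < y} = Iic 0 := by ext y; simp
    rw [hset, withDensity_apply _ measurableSet_Iic]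
    rw [setLIntegral_congr_fun measurableSet_Iic
      (fun y hy => ?_), lintegral_zero]
    simp [hβzero y hy]
  have hP0compl : P 0 ({0} : Set ℝ)ᶜ = 1 := by
    rw [measure_compl (measurableSet_singleton 0) (by rw [hP00]; exact zero_ne_top),
      hP00, hP0univ, tsub_zero]
  -- total return probability from 0
  have hsum0 : (∑' n : ℕ, retProb P {0} n 0) = 1 := by
    rw [tsum_eq_zero_add' ENNReal.summable]
    have h0 : retProb P {0} 0 0 = 0 := hP00
    have hshift : (∑' n : ℕ, retProb P {0} (n + 1) 0)
        = ∑' n : ℕ, ∫⁻ y in ({0} : Set ℝ)ᶜ, retProb P {0} n y ∂(P 0) := rfl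
    rw [h0, zero_add, hshift,
      ← lintegral_tsum (fun n => (retProb_measurable P hPm n).aemeasurable)]
    have : ∫⁻ y in ({0} : Set ℝ)ᶜ, (∑' n : ℕ, retProb P {0} n y) ∂(P 0)
        = ∫⁻ _ in ({0} : Set ℝ)ᶜ, (1 : ℝ≥0∞) ∂(P 0) := by
      apply lintegral_congr_ae
      filter_upwards [ae_restrict_of_ae hae] with y hy
      exact hsum1 y hy
    rw [this, setLIntegral_const, one_mul, hP0compl]
  -- termwise bound
  have hterm : ∀ x : ℝ, 0 < x → ∀ n : ℕ, retProb P {0} n x ≤ ENNReal.ofReal (q ^ n) := by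
    intro x hx n
    rw [hform n x hx]
    apply ENNReal.ofReal_le_ofReal
    calc (∏ k ∈ Finset.range n, (1 - γ (x + k))) * γ (x + n)
        ≤ q ^ n * 1 := by
          apply mul_le_mul (hprod x hx.le n) (hγ _ (by positivity)).2.le
            (hγ _ (by positivity)).1.le (pow_nonneg hq0 n)
      _ = q ^ n := mul_one _
  -- summable majorant
  have hSsum : Summable (fun n : ℕ => ((n : ℝ) + 2) * q ^ n) := by
    have h1 : Summable (fun n : ℕ => (n : ℝ) * q ^ n) := by
      have := summable_pow_mul_geometric_of_norm_lt_one 1 (r := q)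
        (by rw [Real.norm_eq_abs, abs_of_nonneg hq0]; exact hq1)
      simpa using this
    have h2 : Summable (fun n : ℕ => 2 * q ^ n) :=
      (summable_geometric_of_lt_one hq0 hq1).mul_left 2
    have := h1.add h2
    convert this using 2 with n
    ring
  set S : ℝ := ∑' n : ℕ, ((n : ℝ) + 2) * q ^ n with hSdef
  have hSnn : ∀ n : ℕ, 0 ≤ ((n : ℝ) + 2) * q ^ n := by
    intro n
    apply mul_nonneg (by positivity) (pow_nonneg hq0 n)
  have hofS : (∑' n : ℕ, ENNReal.ofReal (((n : ℝ) + 2) * q ^ n)) = ENNReal.ofReal S := by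
    rw [hSdef, ENNReal.ofReal_tsum_of_nonneg hSnn hSsum]
  have hcast : ∀ n : ℕ, ((n : ℝ≥0∞) + 2) * ENNReal.ofReal (q ^ n)
      = ENNReal.ofReal (((n : ℝ) + 2) * q ^ n) := by
    intro n
    rw [ENNReal.ofReal_mul (by positivity)]
    congr 1
    rw [ENNReal.ofReal_add (by positivity) (by norm_num)]
    simp [ENNReal.ofReal_natCast]
  constructor
  · intro x hx
    rcases eq_or_lt_of_le hx with h | h
    · rw [← h]; exact hsum0
    · exact hsum1 x h
  · refine ⟨ENNReal.ofReal S, ENNReal.ofReal_ne_top, ?_⟩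
    intro x hx
    rcases eq_or_lt_of_le hx with h | h
    · -- x = 0
      subst h
      have hret : ∀ n : ℕ, retProb P {0} (n + 1) 0 ≤ ENNReal.ofReal (q ^ n) := by
        intro n
        show (∫⁻ y in ({0} : Set ℝ)ᶜ, retProb P {0} n y ∂(P 0)) ≤ _
        calc ∫⁻ y in ({0} : Set ℝ)ᶜ, retProb P {0} n y ∂(P 0)
            ≤ ∫⁻ _ in ({0} : Set ℝ)ᶜ, ENNReal.ofReal (q ^ n) ∂(P 0) := by
              apply lintegral_mono_ae
              filter_upwards [ae_restrict_of_ae hae] with y hy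
              exact hterm y hy n
          _ = ENNReal.ofReal (q ^ n) := by rw [setLIntegral_const, hP0compl, mul_one]
      rw [tsum_eq_zero_add' ENNReal.summable]
      have hzero : (((0 : ℕ) : ℝ≥0∞) + 1) * retProb P {0} 0 0 = 0 := by
        show _ * P 0 {0} = 0
        rw [hP00, mul_zero]
      rw [hzero, zero_add]
      calc (∑' n : ℕ, (((n + 1 : ℕ) : ℝ≥0∞) + 1) * retProb P {0} (n + 1) 0)
          ≤ ∑' n : ℕ, ((n : ℝ≥0∞) + 2) * ENNReal.ofReal (q ^ n) := by
            apply ENNReal.tsum_le_tsum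
            intro n
            have hn : (((n + 1 : ℕ) : ℝ≥0∞) + 1) = (n : ℝ≥0∞) + 2 := by push_cast; ring
            rw [hn]
            exact mul_le_mul' le_rfl (hret n)
        _ = ∑' n : ℕ, ENNReal.ofReal (((n : ℝ) + 2) * q ^ n) := tsum_congr hcast
        _ = ENNReal.ofReal S := hofS
    · -- x > 0
      calc (∑' n : ℕ, ((n : ℝ≥0∞) + 1) * retProb P {0} n x)
          ≤ ∑' n : ℕ, ((n : ℝ≥0∞) + 2) * ENNReal.ofReal (q ^ n) := by
            apply ENNReal.tsum_le_tsum
            intro n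
            exact mul_le_mul' (add_le_add_right one_le_two _) (hterm x h n)
        _ = ∑' n : ℕ, ENNReal.ofReal (((n : ℝ) + 2) * q ^ n) := by
            exact tsum_congr hcast
        _ = ENNReal.ofReal S := hofS
end
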